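/- Let (R, m) be a Noetherian local ring and F = {F_n}_{n∈ℤ} a Hilbert filtration of ideals in R. Let a_1, …, a_r ∈ R (r > 0) with a_i ∈ F_{n_i} and n_i ≥ 0. If a_1, a_2, …, a_r forms a regular sequence on R and the equality (a_1, a_2, …, a_r) ∩ F_n = Σ_{j=1}^r a_j F_{n−n_j} holds for all n ∈ ℤ, then a_1 t^{n_1}, a_2 t^{n_2}, …, a_r t^{n_r} ∈ R'(F) forms a regular sequence on the associated graded ring G(F). -/

import Mathlib

open IsLocalRing

noncomputable section
universe u

/-! ### Length, depth, dimension, Cohen-Macaulayness -/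

/-- The length of a module: the Krull dimension of its lattice of submodules. -/
noncomputable def moduleLength (R M : Type*) [CommRing R] [AddCommGroup M] [Module R M] :
    WithBot ℕ∞ :=
  Order.krullDim (Submodule R M)

/-- The depth of a module `M` with respect to an ideal `I`: the supremum of lengths of
`M`-regular sequences consisting of elements of `I`. -/
noncomputable def idealDepth {R : Type*} [CommRing R] (I : Ideal R)
    (M : Type*) [AddCommGroup M] [Module R M] : ℕ∞ :=
  sSup {n : ℕ∞ | ∃ rs : List R, (rs.length : ℕ∞) = n ∧ (∀ r ∈ rs, r ∈ I) ∧
    RingTheory.Sequence.IsRegular M rs}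

/-- The depth of a local ring. -/
noncomputable def ringDepth (R : Type*) [CommRing R] [IsLocalRing R] : ℕ∞ :=
  idealDepth (maximalIdeal R) R

/-- The depth of a module over a local ring. -/
noncomputable def moduleDepth (R : Type*) [CommRing R] [IsLocalRing R]
    (M : Type*) [AddCommGroup M] [Module R M] : ℕ∞ :=
  idealDepth (maximalIdeal R) M

/-- The dimension of a module: the Krull dimension of `R/ann M`. -/
noncomputable def moduleDim (R M : Type*) [CommRing R] [AddCommGroup M] [Module R M] :
    WithBot ℕ∞ :=
  ringKrullDim (R ⧸ Module.annihilator R M)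

/-- A local ring is Cohen-Macaulay if its depth equals its Krull dimension. -/
def IsCohenMacaulayLocalRing (R : Type*) [CommRing R] [IsLocalRing R] : Prop :=
  (ringDepth R : WithBot ℕ∞) = ringKrullDim R

/-- A module over a local ring is Cohen-Macaulay if its depth equals its dimension. -/
def IsCohenMacaulayModule (R : Type*) [CommRing R] [IsLocalRing R]
    (M : Type*) [AddCommGroup M] [Module R M] : Prop :=
  (moduleDepth R M : WithBot ℕ∞) = moduleDim R M

/-! ### Injective envelopes, local cohomology, canonical modules -/

/-- `E` is an injective envelope (injective hull) of `N` over `R`: `E` is injective and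
contains a copy of `N` as an essential submodule. -/
def IsInjectiveEnvelope (R N E : Type*) [CommRing R] [AddCommGroup N] [Module R N]
    [AddCommGroup E] [Module R E] : Prop :=
  Module.Injective R E ∧
  ∃ f : N →ₗ[R] E, Function.Injective f ∧
    ∀ W : Submodule R E, W ≠ ⊥ → W ⊓ LinearMap.range f ≠ ⊥

/-- The `i`-th local cohomology of the `R`-module `M` with support in the ideal `I`. -/
noncomputable def LocalCohomology {R : Type u} [CommRing R] (i : ℕ) (I : Ideal R)
    (M : Type u) [AddCommGroup M] [Module R M] : ModuleCat.{u} R :=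
  (localCohomology I i).obj (ModuleCat.of R M)

/-- `K` is a canonical module of `R`, where `𝔪` plays the role of the maximal ideal:
`K` is finitely generated and `R̂ ⊗_R K ≅ Hom_{R̂}(H^d_{𝔪R̂}(R̂), E_{R̂}(R̂/𝔪R̂))`, where
`R̂` is the `𝔪`-adic completion and `d = dim R`. -/
def IsCanonicalModuleAt (R : Type u) [CommRing R] (𝔪 : Ideal R)
    (K : Type u) [AddCommGroup K] [Module R K] : Prop :=
  Module.Finite R K ∧
  ∃ d : ℕ, ringKrullDim R = d ∧
    ∃ (E : Type u) (_ : AddCommGroup E) (_ : Module (AdicCompletion 𝔪 R) E),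
      IsInjectiveEnvelope (AdicCompletion 𝔪 R)
        ((AdicCompletion 𝔪 R) ⧸ 𝔪.map (algebraMap R (AdicCompletion 𝔪 R))) E ∧
      Nonempty ((TensorProduct R (AdicCompletion 𝔪 R) K) ≃ₗ[AdicCompletion 𝔪 R]
        (↥(LocalCohomology d (𝔪.map (algebraMap R (AdicCompletion 𝔪 R)))
            (AdicCompletion 𝔪 R)) →ₗ[AdicCompletion 𝔪 R] E))

/-- `R` has a canonical module (with respect to the ideal `𝔪`). -/
def HasCanonicalModuleAt (R : Type u) [CommRing R] (𝔪 : Ideal R) : Prop :=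
  ∃ (K : Type u) (_ : AddCommGroup K) (_ : Module R K), IsCanonicalModuleAt R 𝔪 K

/-- A ring `R`, with `𝔪` its ((graded) maximal) ideal, is quasi-Gorenstein
if it admits a canonical module `K` with `K ≅ R`. -/
def IsQuasiGorensteinAt (R : Type u) [CommRing R] (𝔪 : Ideal R) : Prop :=
  ∃ (K : Type u) (_ : AddCommGroup K) (_ : Module R K),
    IsCanonicalModuleAt R 𝔪 K ∧ Nonempty (K ≃ₗ[R] R)

/-- A local ring is quasi-Gorenstein if it admits a canonical module isomorphic to itself. -/
def IsQuasiGorensteinLocalRing (R : Type u) [CommRing R] [IsLocalRing R] : Prop :=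
  IsQuasiGorensteinAt R (maximalIdeal R)

/-- A ring is Gorenstein at `𝔪` if it is Cohen-Macaulay (depth = dimension) and
quasi-Gorenstein there. -/
def IsGorensteinAt (R : Type u) [CommRing R] (𝔪 : Ideal R) : Prop :=
  (idealDepth 𝔪 R : WithBot ℕ∞) = ringKrullDim R ∧ IsQuasiGorensteinAt R 𝔪

/-- A local ring is Gorenstein iff it is Cohen-Macaulay and quasi-Gorenstein. -/
def IsGorensteinLocalRing (R : Type u) [CommRing R] [IsLocalRing R] : Prop :=
  IsGorensteinAt R (maximalIdeal R)

/-- A Gorenstein ring: a Noetherian ring all of whose localizations at primes are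
Gorenstein local rings. -/
def IsGorensteinRing (S : Type u) [CommRing S] : Prop :=
  IsNoetherianRing S ∧ ∀ (P : Ideal S) (hP : P.IsPrime),
    letI := hP
    IsGorensteinLocalRing (Localization.AtPrime P)

/-- The module `M` has finite local cohomology (FLC) with respect to `𝔪`:
`H^i_𝔪(M)` is finitely generated for all `i ≠ dim M`. -/
def HasFLCAt (R : Type u) [CommRing R] (𝔪 : Ideal R)
    (M : Type u) [AddCommGroup M] [Module R M] : Prop :=
  ∀ i : ℕ, (i : WithBot ℕ∞) ≠ moduleDim R M → Module.Finite R ↥(LocalCohomology i 𝔪 M)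

/-! ### Multiplicity and `Assh` -/

/-- The multiplicity `e₀(x, M)`: the leading coefficient of the Hilbert function
`n ↦ ℓ_R(M/xⁿM)`, which eventually agrees with a linear polynomial `a·n + b`
when `dim M ≤ 1`. -/
noncomputable def hilbMult {R : Type*} [CommRing R] (x : R)
    (M : Type*) [AddCommGroup M] [Module R M] : ℕ :=
  letI := Classical.propDecidable
  if h : ∃ (a : ℕ) (b : ℤ), ∀ᶠ n : ℕ in Filter.atTop,
      moduleLength R (M ⧸ ((Ideal.span {x} ^ n) • (⊤ : Submodule R M)))
        = ((((a : ℤ) * n + b).toNat : ℕ) : WithBot ℕ∞)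
  then h.choose else 0

/-- `Assh_R M` : the primes in the support of `M` with `dim R/p = dim M`. -/
def AsshSet (R M : Type*) [CommRing R] [AddCommGroup M] [Module R M] :
    Set (PrimeSpectrum R) :=
  {p | p ∈ Module.support R M ∧ ringKrullDim (R ⧸ p.asIdeal) = moduleDim R M}

/-! ### Filtrations of ideals and blow-up algebras -/

/-- A filtration of ideals of `R`: a family `F = {F n}_{n ∈ ℤ}` of ideals with
`F (n+1) ⊆ F n`, `F m * F n ⊆ F (m+n)` and `F 0 = R`. -/
structure IdealFiltration (R : Type u) [CommRing R] : Type u where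
  F : ℤ → Ideal R
  succ_le : ∀ n : ℤ, F (n + 1) ≤ F n
  mul_le : ∀ m n : ℤ, F m * F n ≤ F (m + n)
  zero_eq : F 0 = ⊤

namespace IdealFiltration

variable {R : Type u} [CommRing R] (𝓕 : IdealFiltration R)

lemma neg_one_eq_top : 𝓕.F (-1) = ⊤ := by
  have := 𝓕.succ_le (-1)
  rw [show (-1 : ℤ) + 1 = 0 by ring, 𝓕.zero_eq] at this
  exact top_le_iff.mp this

/-- The extended Rees algebra `R'(F) = ⊕_{n ∈ ℤ} F_n t^n ⊆ R[t, t⁻¹]`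
of a filtration of ideals. -/
def extendedReesAlgebra : Subalgebra R (LaurentPolynomial R) where
  carrier := {f | ∀ n : ℤ, f.coeff n ∈ 𝓕.F n}
  add_mem' := by
    intro a b ha hb n
    simpa using (𝓕.F n).add_mem (ha n) (hb n)
  mul_mem' := by
    classical
    intro a b ha hb n
    show (a * b).coeff n ∈ 𝓕.F n
    rw [AddMonoidAlgebra.coeff_mul]
    refine Submodule.finsuppSum_mem _ _ _ _ fun i _ => ?_
    refine Submodule.finsuppSum_mem _ _ _ _ fun j _ => ?_
    try dsimp only
    split_ifs with hij
    · exact hij ▸ 𝓕.mul_le i j (Ideal.mul_mem_mul (ha i) (hb j))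
    · exact (𝓕.F n).zero_mem
  algebraMap_mem' := by
    intro r n
    show (AddMonoidAlgebra.single 0 r : LaurentPolynomial R).coeff n ∈ 𝓕.F n
    rw [AddMonoidAlgebra.coeff_single, Finsupp.single_apply]
    split_ifs with h
    · rw [← h, 𝓕.zero_eq]; trivial
    · exact (𝓕.F n).zero_mem

lemma single_mem {n : ℤ} {a : R} (ha : a ∈ 𝓕.F n) :
    (AddMonoidAlgebra.single n a : LaurentPolynomial R) ∈ 𝓕.extendedReesAlgebra := by
  intro k
  show (AddMonoidAlgebra.single n a : LaurentPolynomial R).coeff k ∈ 𝓕.F k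
  rw [AddMonoidAlgebra.coeff_single, Finsupp.single_apply]
  split_ifs with h
  · exact h ▸ ha
  · exact (𝓕.F k).zero_mem

/-- The element `t⁻¹` of the extended Rees algebra. -/
def tinv : 𝓕.extendedReesAlgebra :=
  ⟨AddMonoidAlgebra.single (-1) 1, 𝓕.single_mem (by rw [𝓕.neg_one_eq_top]; trivial)⟩

/-- The associated graded ring `G(F) = R'(F)/t⁻¹R'(F) ≅ ⊕_{n ≥ 0} F_n/F_{n+1}`. -/
def gradedRing : Type u :=
  𝓕.extendedReesAlgebra ⧸ Ideal.span {𝓕.tinv}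

instance : CommRing 𝓕.gradedRing :=
  inferInstanceAs (CommRing (𝓕.extendedReesAlgebra ⧸ Ideal.span {𝓕.tinv}))

instance : Algebra 𝓕.extendedReesAlgebra 𝓕.gradedRing :=
  inferInstanceAs (Algebra 𝓕.extendedReesAlgebra (𝓕.extendedReesAlgebra ⧸ Ideal.span {𝓕.tinv}))

/-- The natural quotient map `R'(F) → G(F)`. -/
def toGradedRing : 𝓕.extendedReesAlgebra →+* 𝓕.gradedRing :=
  Ideal.Quotient.mk (Ideal.span {𝓕.tinv})

/-- An element of the extended Rees algebra is homogeneous (of degree `n`) if it is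
of the form `a tⁿ`. -/
def IsHomogeneousElem (x : 𝓕.extendedReesAlgebra) : Prop :=
  ∃ (n : ℤ) (a : R), (x : LaurentPolynomial R) = AddMonoidAlgebra.single n a

/-- Homogeneous of non-negative degree. -/
def IsHomogeneousElemOfNonnegDegree (x : 𝓕.extendedReesAlgebra) : Prop :=
  ∃ (n : ℤ) (a : R), 0 ≤ n ∧ (x : LaurentPolynomial R) = AddMonoidAlgebra.single n a

/-- An element of the associated graded ring is homogeneous if it is the image of a
homogeneous element of the extended Rees algebra. -/
def IsHomogeneousElemG (g : 𝓕.gradedRing) : Prop :=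
  ∃ x : 𝓕.extendedReesAlgebra, 𝓕.IsHomogeneousElem x ∧ g = 𝓕.toGradedRing x

/-- An ideal of the extended Rees algebra is graded (homogeneous) if it is generated by
homogeneous elements. -/
def IsGradedIdeal (P : Ideal 𝓕.extendedReesAlgebra) : Prop :=
  ∃ S : Set 𝓕.extendedReesAlgebra, (∀ x ∈ S, 𝓕.IsHomogeneousElem x) ∧ P = Ideal.span S

/-- An ideal of the associated graded ring is graded (homogeneous) if it is generated by
homogeneous elements. -/
def IsGradedIdealG (Q : Ideal 𝓕.gradedRing) : Prop :=
  ∃ S : Set 𝓕.gradedRing, (∀ g ∈ S, 𝓕.IsHomogeneousElemG g) ∧ Q = Ideal.span S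

/-- The unique graded maximal ideal `𝔐 = m ⊕ (⊕_{n ≠ 0} F_n t^n)` of the extended Rees
algebra of a filtration over a local ring. -/
def gradedMaxIdeal [IsLocalRing R] : Ideal 𝓕.extendedReesAlgebra :=
  Ideal.span {x | ∃ (n : ℤ) (a : R), (x : LaurentPolynomial R) = AddMonoidAlgebra.single n a ∧
    a ∈ 𝓕.F n ∧ (n = 0 → a ∈ maximalIdeal R)}

/-- The unique graded maximal ideal `𝔑` of the associated graded ring. -/
def gradedMaxIdealG [IsLocalRing R] : Ideal 𝓕.gradedRing :=
  (𝓕.gradedMaxIdeal).map 𝓕.toGradedRing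

/-- The irrelevant ideal `G(F)_+ = ⊕_{n > 0} F_n/F_{n+1}` of the associated graded ring. -/
def irrelevantIdealG : Ideal 𝓕.gradedRing :=
  Ideal.map 𝓕.toGradedRing
    (Ideal.span {x : 𝓕.extendedReesAlgebra | ∃ (n : ℤ) (a : R), 0 < n ∧
      (x : LaurentPolynomial R) = AddMonoidAlgebra.single n a ∧ a ∈ 𝓕.F n})

/-- A filtration is Noetherian if its extended Rees algebra is a Noetherian ring. -/
def IsNoetherianFiltration : Prop :=
  IsNoetherianRing 𝓕.extendedReesAlgebra

/-- A Hilbert filtration: the extended Rees algebra is Noetherian, `F 1` is `m`-primary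
and `F (n+1) = F 1 * F n` for all large `n`. -/
def IsHilbertFiltration [IsLocalRing R] : Prop :=
  IsNoetherianRing 𝓕.extendedReesAlgebra ∧ (𝓕.F 1).radical = maximalIdeal R ∧
    ∃ N : ℤ, ∀ n ≥ N, 𝓕.F (n + 1) = 𝓕.F 1 * 𝓕.F n

/-- The quotient filtration `F/I` on `R/I`. -/
def quotFiltration (I : Ideal R) : IdealFiltration (R ⧸ I) where
  F n := (𝓕.F n).map (Ideal.Quotient.mk I)
  succ_le n := Ideal.map_mono (𝓕.succ_le n)
  mul_le m n := by
    rw [← Ideal.map_mul]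
    exact Ideal.map_mono (𝓕.mul_le m n)
  zero_eq := by
    show (𝓕.F 0).map (Ideal.Quotient.mk I) = ⊤
    rw [𝓕.zero_eq, Ideal.map_top]

/-- The extension `p' = pR[t,t⁻¹] ∩ R'(F)` of a prime `p ⊆ R` to the extended
Rees algebra. -/
def primeExt (p : Ideal R) : Ideal 𝓕.extendedReesAlgebra :=
  Ideal.comap 𝓕.extendedReesAlgebra.val
    (Ideal.map (algebraMap R (LaurentPolynomial R)) p)

end IdealFiltration

/-- The `I`-adic filtration of an ideal `I` (with `F n = R` for `n ≤ 0`). -/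
def adicFiltration {R : Type u} [CommRing R] (I : Ideal R) : IdealFiltration R where
  F n := I ^ n.toNat
  succ_le n := Ideal.pow_le_pow_right (by omega)
  mul_le m n := by
    rw [← pow_add]
    exact Ideal.pow_le_pow_right (by omega)
  zero_eq := by simp


/-! ### Auxiliary material for `statement_2` -/

section St2Aux

open RingTheory.Sequence

variable {R : Type u} [CommRing R]

lemma st2_le_sum {ι M : Type*} [AddCommMonoid M] [Module R M]
    {s : Finset ι} {p : ι → Submodule R M} {j : ι} (hj : j ∈ s) :
    p j ≤ ∑ k ∈ s, p k := by
  classical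
  rw [← Finset.add_sum_erase _ _ hj, Submodule.add_eq_sup]
  exact le_sup_left

lemma st2_sum_le {ι M : Type*} [AddCommMonoid M] [Module R M]
    {s : Finset ι} {p : ι → Submodule R M} {N : Submodule R M} (h : ∀ j ∈ s, p j ≤ N) :
    ∑ k ∈ s, p k ≤ N := by
  classical
  induction s using Finset.induction_on with
  | empty => simp
  | @insert j s hj ih =>
    rw [Finset.sum_insert hj, Submodule.add_eq_sup]
    exact sup_le (h _ (Finset.mem_insert_self _ _))
      (ih fun k hk => h k (Finset.mem_insert_of_mem hk))

lemma st2_mem_sum {ι M : Type*} [AddCommMonoid M] [Module R M]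
    {s : Finset ι} {p : ι → Submodule R M} {x : M} (hx : x ∈ ∑ k ∈ s, p k) :
    ∃ c : ι → M, (∀ j, c j ∈ p j) ∧ x = ∑ k ∈ s, c k := by
  classical
  induction s using Finset.induction_on generalizing x with
  | empty => exact ⟨fun _ => 0, fun j => (p j).zero_mem, by simpa using hx⟩
  | @insert j s hj ih =>
    rw [Finset.sum_insert hj, Submodule.add_eq_sup] at hx
    obtain ⟨y, hy, z, hz, rfl⟩ := Submodule.mem_sup.mp hx
    obtain ⟨c, hc, rfl⟩ := ih hz
    refine ⟨Function.update c j y, fun k => ?_, ?_⟩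
    · rcases eq_or_ne k j with rfl | hk
      · simpa using hy
      · simpa [Function.update_of_ne hk] using hc k
    · rw [Finset.sum_insert hj, Function.update_self]
      congr 1
      refine (Finset.sum_congr rfl fun k hk => ?_).symm
      have hkj : k ≠ j := by rintro rfl; exact hj hk
      rw [Function.update_of_ne hkj]

lemma st2_mem_take_ofFn {α : Type*} {r : ℕ} (v : Fin r → α) (i : ℕ) (z : α) :
    z ∈ (List.ofFn v).take i ↔ ∃ j : Fin r, (j : ℕ) < i ∧ v j = z := by
  constructor
  · intro hz
    rw [List.mem_iff_getElem] at hz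
    obtain ⟨k, hk, hzk⟩ := hz
    have hk' : k < i ∧ k < r := by
      rw [List.length_take, List.length_ofFn] at hk; omega
    refine ⟨⟨k, hk'.2⟩, hk'.1, ?_⟩
    rw [List.getElem_take, List.getElem_ofFn] at hzk
    exact hzk
  · rintro ⟨j, hj, rfl⟩
    rw [List.mem_iff_getElem]
    refine ⟨(j : ℕ), by rw [List.length_take, List.length_ofFn]; omega, ?_⟩
    rw [List.getElem_take, List.getElem_ofFn]

lemma st2_smul_top {A : Type*} [CommRing A] (I : Ideal A) :
    I • (⊤ : Submodule A A) = I := by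
  refine le_antisymm (Submodule.smul_le.2 fun z hz t _ => ?_) (fun z hz => ?_)
  · simpa [smul_eq_mul] using I.mul_mem_right t hz
  · simpa using Submodule.smul_mem_smul hz (Submodule.mem_top (x := (1 : A)))

namespace IdealFiltration

variable (𝓕 : IdealFiltration R)

lemma F_anti {m k : ℤ} (h : m ≤ k) : 𝓕.F k ≤ 𝓕.F m := by
  obtain ⟨d, rfl⟩ := Int.le.dest h
  clear h
  induction d with
  | zero => simp
  | succ d ih =>
    refine le_trans ?_ ih
    have := 𝓕.succ_le (m + d)
    rwa [show (m + (d : ℤ)) + 1 = m + ((d : ℕ) + 1 : ℕ) by push_cast; ring] at this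

lemma F_nonpos {m : ℤ} (h : m ≤ 0) : 𝓕.F m = ⊤ :=
  eq_top_iff.2 (by simpa [𝓕.zero_eq] using 𝓕.F_anti (k := 0) h)

end IdealFiltration

section St2Core

variable (𝓕 : IdealFiltration R) {r : ℕ} (a : Fin r → R) (n : Fin r → ℤ)

/-- The ideal `(a_0, …, a_{i-1})`. -/
def st2AI (i : ℕ) : Ideal R := Ideal.span (a '' {j : Fin r | (j : ℕ) < i})

/-- The ideal `∑_{j < i} (a_j) F_{m - n_j}`. -/
def st2SS (i : ℕ) (m : ℤ) : Ideal R :=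
  ∑ j ∈ Finset.univ.filter (fun j : Fin r => (j : ℕ) < i),
    Ideal.span {a j} * 𝓕.F (m - n j)

lemma st2SS_def (i : ℕ) (m : ℤ) :
    st2SS 𝓕 a n i m = ∑ j ∈ Finset.univ.filter (fun j : Fin r => (j : ℕ) < i),
      Ideal.span {a j} * 𝓕.F (m - n j) := rfl

lemma st2AI_mono {i i' : ℕ} (h : i ≤ i') : st2AI a i ≤ st2AI a i' :=
  Ideal.span_mono (Set.image_mono fun _ hj => lt_of_lt_of_le hj (by exact_mod_cast h))

lemma st2_mem_AI {i : ℕ} {j : Fin r} (hj : (j : ℕ) < i) : a j ∈ st2AI a i :=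
  Ideal.subset_span ⟨j, hj, rfl⟩

lemma st2_ofList_take (i : ℕ) :
    Ideal.ofList ((List.ofFn a).take i) = st2AI a i := by
  unfold st2AI
  refine le_antisymm (Ideal.span_le.2 ?_) (Ideal.span_le.2 ?_)
  · intro z hz
    obtain ⟨j, hj, rfl⟩ := (st2_mem_take_ofFn a i z).1 hz
    exact Ideal.subset_span ⟨j, hj, rfl⟩
  · rintro z ⟨j, hj, rfl⟩
    exact Ideal.subset_span ((st2_mem_take_ofFn a i _).2 ⟨j, hj, rfl⟩)

lemma st2AI_le_span_range : st2AI a r ≤ Ideal.span (Set.range a) :=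
  Ideal.span_mono (by rintro z ⟨j, _, rfl⟩; exact ⟨j, rfl⟩)

lemma st2AI_r_eq : st2AI a r = Ideal.span (Set.range a) := by
  refine le_antisymm (st2AI_le_span_range a) (Ideal.span_mono ?_)
  rintro z ⟨j, rfl⟩
  exact ⟨j, j.isLt, rfl⟩

lemma st2SS_le_AI (i : ℕ) (m : ℤ) : st2SS 𝓕 a n i m ≤ st2AI a i := by
  refine st2_sum_le fun j hj => ?_
  rw [Finset.mem_filter] at hj
  calc Ideal.span {a j} * 𝓕.F (m - n j) ≤ Ideal.span {a j} * ⊤ :=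
        Ideal.mul_mono_right le_top
    _ = Ideal.span {a j} := Ideal.mul_top _
    _ ≤ st2AI a i := Ideal.span_mono (Set.singleton_subset_iff.2 ⟨j, hj.2, rfl⟩)

lemma st2_term_le_F (ha : ∀ j, a j ∈ 𝓕.F (n j)) (j : Fin r) (m : ℤ) :
    Ideal.span {a j} * 𝓕.F (m - n j) ≤ 𝓕.F m := by
  have h1 : Ideal.span {a j} ≤ 𝓕.F (n j) :=
    (Ideal.span_singleton_le_iff_mem _).mpr (ha j)
  calc Ideal.span {a j} * 𝓕.F (m - n j) ≤ 𝓕.F (n j) * 𝓕.F (m - n j) :=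
        Ideal.mul_mono h1 le_rfl
    _ ≤ 𝓕.F (n j + (m - n j)) := 𝓕.mul_le _ _
    _ = 𝓕.F m := by rw [show n j + (m - n j) = m by ring]

lemma st2SS_le_F (ha : ∀ j, a j ∈ 𝓕.F (n j)) (i : ℕ) (m : ℤ) :
    st2SS 𝓕 a n i m ≤ 𝓕.F m :=
  st2_sum_le fun j _ => st2_term_le_F 𝓕 a n ha j m

lemma st2AI_eq_sum (i : ℕ) :
    st2AI a i = ∑ j ∈ Finset.univ.filter (fun j : Fin r => (j : ℕ) < i),
      Ideal.span {a j} := by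
  refine le_antisymm (Ideal.span_le.2 ?_) (st2_sum_le fun j hj => ?_)
  · rintro z ⟨j, hj, rfl⟩
    exact st2_le_sum (Finset.mem_filter.2 ⟨Finset.mem_univ _, hj⟩)
      (Ideal.mem_span_singleton_self _)
  · rw [Finset.mem_filter] at hj
    exact Ideal.span_mono (Set.singleton_subset_iff.2 ⟨j, hj.2, rfl⟩)

lemma st2SS_nonpos (hn : ∀ j, 0 ≤ n j) {m : ℤ} (hm : m ≤ 0) (i : ℕ) :
    st2AI a i ≤ st2SS 𝓕 a n i m := by
  rw [st2AI_eq_sum]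
  refine st2_sum_le fun j hj => le_trans ?_ (st2_le_sum hj)
  rw [𝓕.F_nonpos (show m - n j ≤ 0 by have := hn j; omega), Ideal.mul_top]

lemma st2_F_mul_SS (ha : ∀ j, a j ∈ 𝓕.F (n j)) {i : ℕ} {k m : ℤ} {x y : R}
    (hx : x ∈ 𝓕.F k) (hy : y ∈ st2SS 𝓕 a n i m) :
    x * y ∈ st2SS 𝓕 a n i (k + m) := by
  classical
  obtain ⟨c, hc, rfl⟩ := st2_mem_sum hy
  rw [Finset.mul_sum]
  refine Submodule.sum_mem _ fun j hj => ?_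
  obtain ⟨z, hz, hcz⟩ := Ideal.mem_span_singleton_mul.mp (hc j)
  have hz2 : x * z ∈ 𝓕.F ((k + m) - n j) := by
    have := 𝓕.mul_le k (m - n j) (Ideal.mul_mem_mul hx hz)
    rwa [show k + (m - n j) = (k + m) - n j by ring] at this
  have hmem : a j * (x * z) ∈ Ideal.span {a j} * 𝓕.F ((k + m) - n j) :=
    Ideal.mul_mem_mul (Ideal.mem_span_singleton_self _) hz2
  have : x * c j = a j * (x * z) := by rw [← hcz]; ring
  rw [this]
  exact st2_le_sum hj hmem

lemma st2_amem [IsLocalRing R] (hreg : RingTheory.Sequence.IsRegular R (List.ofFn a))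
    (j : Fin r) : a j ∈ IsLocalRing.maximalIdeal R := by
  by_contra hj
  have hu : IsUnit (a j) := by
    rwa [IsLocalRing.mem_maximalIdeal, mem_nonunits_iff, not_not] at hj
  have h1 : Ideal.ofList (List.ofFn a) = ⊤ :=
    Ideal.eq_top_of_isUnit_mem _
      (Ideal.subset_span (show a j ∈ {x | x ∈ List.ofFn a} from by
        simp [List.mem_ofFn])) hu
  have h2 : Ideal.ofList (List.ofFn a) • (⊤ : Submodule R R) = ⊤ := by
    rw [h1, Submodule.top_smul]
  exact hreg.top_ne_smul h2.symm

lemma st2_regmod (hreg : RingTheory.Sequence.IsRegular R (List.ofFn a))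
    (i : Fin r) {b : R} (hb : a i * b ∈ st2AI a (i : ℕ)) : b ∈ st2AI a (i : ℕ) := by
  have hlt : (i : ℕ) < (List.ofFn a).length := by simp
  have h := hreg.toIsWeaklyRegular.regular_mod_prev (i : ℕ) hlt
  rw [st2_ofList_take, st2_smul_top] at h
  have hget : (List.ofFn a)[(i : ℕ)]'hlt = a i := by
    rw [List.getElem_ofFn]
  rw [hget] at h
  have h0 : a i • (Submodule.Quotient.mk b : R ⧸ (st2AI a (i : ℕ) : Submodule R R)) = 0 := by
    rw [← Submodule.Quotient.mk_smul]
    exact (Submodule.Quotient.mk_eq_zero _).2 (by simpa [smul_eq_mul] using hb)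
  have := h (show a i • (Submodule.Quotient.mk b :
      R ⧸ (st2AI a (i : ℕ) : Submodule R R)) = a i • 0 by rw [h0, smul_zero])
  exact (Submodule.Quotient.mk_eq_zero _).1 this


lemma st2_term_le_AI {i : ℕ} {j : Fin r} (hj : (j : ℕ) < i) (m : ℤ) :
    Ideal.span {a j} * 𝓕.F (m - n j) ≤ st2AI a i :=
  le_trans (le_trans (Ideal.mul_mono_right le_top) (le_of_eq (Ideal.mul_top _)))
    (Ideal.span_mono (Set.singleton_subset_iff.2 ⟨j, hj, rfl⟩))

lemma st2_C [IsLocalRing R] [IsNoetherianRing R]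
    (hn : ∀ j, 0 ≤ n j) (ha : ∀ j, a j ∈ 𝓕.F (n j))
    (hreg : RingTheory.Sequence.IsRegular R (List.ofFn a))
    (hint : ∀ m : ℤ, Ideal.span (Set.range a) ⊓ 𝓕.F m =
      ∑ j : Fin r, Ideal.span {a j} * 𝓕.F (m - n j)) :
    ∀ i ≤ r, ∀ m : ℤ, (st2AI a i ⊓ 𝓕.F m : Ideal R) = st2SS 𝓕 a n i m := by
  classical
  have hPr : ∀ m : ℤ, (st2AI a r ⊓ 𝓕.F m : Ideal R) = st2SS 𝓕 a n r m := by
    intro m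
    rw [st2AI_r_eq a, hint m]
    unfold st2SS
    rw [Finset.filter_true_of_mem (fun j _ => j.isLt)]
  have hstep : ∀ i, i < r →
      (∀ m : ℤ, (st2AI a (i+1) ⊓ 𝓕.F m : Ideal R) = st2SS 𝓕 a n (i+1) m) →
      ∀ m : ℤ, (st2AI a i ⊓ 𝓕.F m : Ideal R) = st2SS 𝓕 a n i m := by
    intro i hi hP1
    have hsplit : Finset.univ.filter (fun j : Fin r => (j : ℕ) < i + 1)
        = insert (⟨i, hi⟩ : Fin r) (Finset.univ.filter (fun j : Fin r => (j : ℕ) < i)) := by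
      ext j
      simp only [Finset.mem_filter, Finset.mem_insert, Finset.mem_univ, true_and,
        Fin.ext_iff]
      omega
    have hnotmem : (⟨i, hi⟩ : Fin r) ∉
        Finset.univ.filter (fun j : Fin r => (j : ℕ) < i) := by
      simp
    have hdecomp : ∀ m : ℤ, ∀ b ∈ (st2AI a i ⊓ 𝓕.F m : Ideal R),
        ∃ d ∈ st2SS 𝓕 a n i m, ∃ y,
          (y ∈ st2AI a i ∧ y ∈ 𝓕.F (m - n ⟨i, hi⟩)) ∧ b = d + a ⟨i, hi⟩ * y := by
      intro m b hb
      have hb1 : b ∈ (st2AI a (i+1) ⊓ 𝓕.F m : Ideal R) :=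
        ⟨st2AI_mono a (Nat.le_succ i) hb.1, hb.2⟩
      rw [hP1 m] at hb1
      obtain ⟨c, hc, hbc⟩ := st2_mem_sum hb1
      rw [hsplit, Finset.sum_insert hnotmem] at hbc
      obtain ⟨y, hy, hcy⟩ := Ideal.mem_span_singleton_mul.mp (hc ⟨i, hi⟩)
      set d : R := ∑ j ∈ Finset.univ.filter (fun j : Fin r => (j : ℕ) < i), c j with hd
      have hdmem : d ∈ st2SS 𝓕 a n i m :=
        Submodule.sum_mem _ fun j hj => st2_le_sum hj (hc j)
      have hay : a ⟨i, hi⟩ * y ∈ st2AI a i := by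
        have hby : a ⟨i, hi⟩ * y = b - d := by rw [hbc, hcy]; ring
        rw [hby]
        exact Submodule.sub_mem _ hb.1 (st2SS_le_AI 𝓕 a n i m hdmem)
      exact ⟨d, hdmem, y, ⟨st2_regmod a hreg ⟨i, hi⟩ hay, hy⟩, by rw [hbc, hcy]; ring⟩
    intro m
    refine le_antisymm ?_ (le_inf (st2SS_le_AI 𝓕 a n i m) (st2SS_le_F 𝓕 a n ha i m))
    by_cases h0 : n ⟨i, hi⟩ = 0
    · have hNN : (st2AI a i ⊓ 𝓕.F m : Submodule R R) ≤
          (st2SS 𝓕 a n i m : Submodule R R) ⊔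
            Ideal.span {a ⟨i, hi⟩} • (st2AI a i ⊓ 𝓕.F m : Submodule R R) := by
        intro b hb
        obtain ⟨d, hd, y, hy, rfl⟩ := hdecomp m b hb
        have hyN : y ∈ (st2AI a i ⊓ 𝓕.F m : Submodule R R) := by
          refine ⟨hy.1, ?_⟩
          have h2 := hy.2
          rwa [h0, sub_zero] at h2
        refine Submodule.add_mem_sup hd ?_
        have h3 := Submodule.smul_mem_smul
          (Ideal.mem_span_singleton_self (a ⟨i, hi⟩)) hyN
        simpa [smul_eq_mul] using h3
      have hjac : Ideal.span {a ⟨i, hi⟩} ≤ Ideal.jacobson ⊥ := by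
        rw [IsLocalRing.jacobson_eq_maximalIdeal (⊥ : Ideal R) bot_ne_top]
        exact (Ideal.span_singleton_le_iff_mem _).2 (st2_amem a hreg _)
      exact Submodule.le_of_le_smul_of_le_jacobson_bot
        (IsNoetherian.noetherian _) hjac hNN
    · have hpos : 0 < n ⟨i, hi⟩ := lt_of_le_of_ne (hn _) (Ne.symm h0)
      have main : ∀ N : ℕ, ∀ m' : ℤ, m' ≤ (N : ℤ) →
          (st2AI a i ⊓ 𝓕.F m' : Ideal R) ≤ st2SS 𝓕 a n i m' := by
        intro N
        induction N using Nat.strong_induction_on with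
        | _ N ihN =>
          intro m' hm' b hb
          by_cases hm0 : m' ≤ 0
          · exact st2SS_nonpos 𝓕 a n hn hm0 i hb.1
          · push_neg at hm0
            obtain ⟨d, hd, y, hy, rfl⟩ := hdecomp m' b hb
            have hN1 : N - 1 < N := by omega
            have hy' : y ∈ st2SS 𝓕 a n i (m' - n ⟨i, hi⟩) :=
              ihN (N - 1) hN1 (m' - n ⟨i, hi⟩) (by omega) ⟨hy.1, hy.2⟩
            have hmul := st2_F_mul_SS 𝓕 a n ha (ha ⟨i, hi⟩) hy'
            rw [show n ⟨i, hi⟩ + (m' - n ⟨i, hi⟩) = m' by ring] at hmul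
            exact Submodule.add_mem _ hd hmul
      intro b hb
      exact main m.toNat m (Int.self_le_toNat m) hb
  intro i hir
  have key : ∀ d : ℕ, ∀ i, i + d = r →
      ∀ m : ℤ, (st2AI a i ⊓ 𝓕.F m : Ideal R) = st2SS 𝓕 a n i m := by
    intro d
    induction d with
    | zero =>
      intro i hi
      have hieq : i = r := by omega
      subst hieq
      exact hPr
    | succ d ih =>
      intro i hi
      exact hstep i (by omega) (ih (i+1) (by omega))
  exact key (r - i) i (by omega)

lemma st2_star [IsLocalRing R] [IsNoetherianRing R]
    (hn : ∀ j, 0 ≤ n j) (ha : ∀ j, a j ∈ 𝓕.F (n j))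
    (hreg : RingTheory.Sequence.IsRegular R (List.ofFn a))
    (hint : ∀ m : ℤ, Ideal.span (Set.range a) ⊓ 𝓕.F m =
      ∑ j : Fin r, Ideal.span {a j} * 𝓕.F (m - n j))
    (i : Fin r) (m : ℤ) (b : R) (hb : b ∈ 𝓕.F m)
    (h : a i * b ∈ 𝓕.F (m + n i + 1) ⊔ st2SS 𝓕 a n (i : ℕ) (m + n i)) :
    b ∈ 𝓕.F (m + 1) ⊔ st2SS 𝓕 a n (i : ℕ) m := by
  classical
  have hC := st2_C 𝓕 a n hn ha hreg hint
  obtain ⟨c0, hc0, d, hdmem, hcd⟩ := Submodule.mem_sup.mp h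
  obtain ⟨cc, hcc, hdsum⟩ := st2_mem_sum hdmem
  have hsplit : Finset.univ.filter (fun j : Fin r => (j : ℕ) < (i : ℕ) + 1)
      = insert i (Finset.univ.filter (fun j : Fin r => (j : ℕ) < (i : ℕ))) := by
    ext j
    simp only [Finset.mem_filter, Finset.mem_insert, Finset.mem_univ, true_and, Fin.ext_iff]
    omega
  have hnotmem : i ∉ Finset.univ.filter (fun j : Fin r => (j : ℕ) < (i : ℕ)) := by simp
  have hc0AI : c0 ∈ st2AI a ((i : ℕ) + 1) := by
    have hab : a i * b ∈ st2AI a ((i : ℕ) + 1) :=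
      Ideal.mul_mem_right _ _ (st2_mem_AI a (Nat.lt_succ_self _))
    have hdAI : d ∈ st2AI a ((i : ℕ) + 1) :=
      st2AI_mono a (Nat.le_succ _) (st2SS_le_AI 𝓕 a n _ _ hdmem)
    have hc0e : c0 = a i * b - d := by rw [← hcd]; ring
    rw [hc0e]
    exact Submodule.sub_mem _ hab hdAI
  have hc0SS : c0 ∈ st2SS 𝓕 a n ((i : ℕ) + 1) (m + n i + 1) := by
    rw [← hC ((i : ℕ) + 1) i.isLt (m + n i + 1)]
    exact ⟨hc0AI, hc0⟩
  obtain ⟨e, he, hesum⟩ := st2_mem_sum hc0SS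
  rw [hsplit, Finset.sum_insert hnotmem] at hesum
  obtain ⟨w, hw, hew⟩ := Ideal.mem_span_singleton_mul.mp (he i)
  have hw' : w ∈ 𝓕.F (m + 1) := by
    rwa [show m + n i + 1 - n i = m + 1 by ring] at hw
  have hkey : a i * (b - w) ∈ st2AI a (i : ℕ) := by
    have heq : a i * (b - w)
        = (∑ j ∈ Finset.univ.filter (fun j : Fin r => (j : ℕ) < (i : ℕ)), e j)
          + (∑ j ∈ Finset.univ.filter (fun j : Fin r => (j : ℕ) < (i : ℕ)), cc j) := by
      linear_combination -hcd + hesum + hdsum - hew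
    rw [heq]
    refine Submodule.add_mem _ ?_ ?_
    · refine Submodule.sum_mem _ fun j hj => ?_
      exact st2_term_le_AI 𝓕 a n (Finset.mem_filter.mp hj).2 _ (he j)
    · refine Submodule.sum_mem _ fun j hj => ?_
      exact st2_term_le_AI 𝓕 a n (Finset.mem_filter.mp hj).2 _ (hcc j)
  have hbw : b - w ∈ (st2AI a (i : ℕ) ⊓ 𝓕.F m : Ideal R) :=
    ⟨st2_regmod a hreg i hkey,
     Submodule.sub_mem _ hb (𝓕.F_anti (by omega) hw')⟩
  rw [hC (i : ℕ) (le_of_lt i.isLt) m] at hbw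
  have hbeq : b = w + (b - w) := by ring
  rw [hbeq]
  exact Submodule.add_mem_sup hw' hbw

end St2Core

set_option synthInstance.maxHeartbeats 1000000
set_option maxHeartbeats 2000000

namespace IdealFiltration

variable (𝓕 : IdealFiltration R)

/-- The ideal of the extended Rees algebra cut out coefficientwise by a family of ideals. -/
def coeffIdeal (D : ℤ → Ideal R) (hD : ∀ k l : ℤ, 𝓕.F k * D l ≤ D (k + l)) :
    Ideal 𝓕.extendedReesAlgebra where
  carrier := {f | ∀ m : ℤ, (f : LaurentPolynomial R).coeff m ∈ D m}
  zero_mem' := fun m => by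
    show (0 : LaurentPolynomial R).coeff m ∈ D m
    simp
  add_mem' := by
    intro f g hf hg m
    have h : ((f + g : 𝓕.extendedReesAlgebra) : LaurentPolynomial R).coeff m
        = (f : LaurentPolynomial R).coeff m + (g : LaurentPolynomial R).coeff m := rfl
    rw [h]
    exact (D m).add_mem (hf m) (hg m)
  smul_mem' := by
    classical
    intro c f hf m
    have hc : ∀ k : ℤ, (c : LaurentPolynomial R).coeff k ∈ 𝓕.F k := c.2
    have hcf : ((c • f : 𝓕.extendedReesAlgebra) : LaurentPolynomial R)
        = (c : LaurentPolynomial R) * (f : LaurentPolynomial R) := rfl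
    show ((c • f : 𝓕.extendedReesAlgebra) : LaurentPolynomial R).coeff m ∈ D m
    rw [hcf, AddMonoidAlgebra.coeff_mul]
    refine Submodule.finsuppSum_mem _ _ _ _ fun k _ => ?_
    refine Submodule.finsuppSum_mem _ _ _ _ fun l _ => ?_
    try dsimp only
    split_ifs with hkl
    · exact hkl ▸ hD k l (Ideal.mul_mem_mul (hc k) (hf l))
    · exact (D m).zero_mem

lemma mem_coeffIdeal {D : ℤ → Ideal R} {hD : ∀ k l : ℤ, 𝓕.F k * D l ≤ D (k + l)}
    {f : 𝓕.extendedReesAlgebra} :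
    f ∈ 𝓕.coeffIdeal D hD ↔ ∀ m : ℤ, (f : LaurentPolynomial R).coeff m ∈ D m :=
  ⟨fun h => h, fun h => h⟩

end IdealFiltration

section St2Rees

variable (𝓕 : IdealFiltration R) {r : ℕ} (a : Fin r → R) (n : Fin r → ℤ)

/-- The family of ideals `F_{m+1} + ∑_{j<i} a_j F_{m-n_j}`. -/
def st2D (i : ℕ) (m : ℤ) : Ideal R := 𝓕.F (m + 1) ⊔ st2SS 𝓕 a n i m

lemma st2D_stab (ha : ∀ j, a j ∈ 𝓕.F (n j)) (i : ℕ) :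
    ∀ k l : ℤ, 𝓕.F k * st2D 𝓕 a n i l ≤ st2D 𝓕 a n i (k + l) := by
  intro k l
  rw [Ideal.mul_le]
  intro x hx y hy
  obtain ⟨u, hu, v, hv, rfl⟩ := Submodule.mem_sup.mp hy
  rw [mul_add]
  refine Submodule.add_mem _ ?_ ?_
  · apply Ideal.mem_sup_left
    have h1 := 𝓕.mul_le k (l + 1) (Ideal.mul_mem_mul hx hu)
    rwa [show k + (l + 1) = (k + l) + 1 by ring] at h1
  · exact Ideal.mem_sup_right (st2_F_mul_SS 𝓕 a n ha hx hv)

/-- The homogeneous elements `a_j t^{n_j}` of the extended Rees algebra. -/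
def st2x (ha : ∀ j, a j ∈ 𝓕.F (n j)) : Fin r → 𝓕.extendedReesAlgebra :=
  fun j => ⟨AddMonoidAlgebra.single (n j) (a j), 𝓕.single_mem (ha j)⟩

/-- The ideal `(t⁻¹, a_0 t^{n_0}, …, a_{i-1} t^{n_{i-1}})` of the extended Rees algebra. -/
def st2K (ha : ∀ j, a j ∈ 𝓕.F (n j)) (i : ℕ) : Ideal 𝓕.extendedReesAlgebra :=
  Ideal.span {𝓕.tinv} ⊔ Ideal.ofList ((List.ofFn (st2x 𝓕 a n ha)).take i)

lemma st2_single_mem_K (ha : ∀ j, a j ∈ 𝓕.F (n j)) {i : ℕ}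
    (g : 𝓕.extendedReesAlgebra) (m : ℤ) (u : R)
    (hg : (g : LaurentPolynomial R) = AddMonoidAlgebra.single m u)
    (hu : u ∈ st2D 𝓕 a n i m) :
    g ∈ st2K 𝓕 a n ha i := by
  classical
  obtain ⟨v, hv, w, hw, hvw⟩ := Submodule.mem_sup.mp hu
  have hgvF : v ∈ 𝓕.F m := 𝓕.F_anti (by omega) hv
  have hgwF : w ∈ 𝓕.F m := st2SS_le_F 𝓕 a n ha i m hw
  have hgsplit : g = ⟨AddMonoidAlgebra.single m v, 𝓕.single_mem hgvF⟩
      + ⟨AddMonoidAlgebra.single m w, 𝓕.single_mem hgwF⟩ := by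
    apply Subtype.ext
    show (g : LaurentPolynomial R) = AddMonoidAlgebra.single m v + AddMonoidAlgebra.single m w
    rw [hg, ← AddMonoidAlgebra.single_add, hvw]
  rw [hgsplit]
  refine Submodule.add_mem _ ?_ ?_
  · apply Ideal.mem_sup_left
    rw [Ideal.mem_span_singleton]
    refine ⟨⟨AddMonoidAlgebra.single (m + 1) v, 𝓕.single_mem hv⟩, ?_⟩
    apply Subtype.ext
    simp only [MulMemClass.coe_mul]
    show (AddMonoidAlgebra.single m v : LaurentPolynomial R)
        = AddMonoidAlgebra.single (-1 : ℤ) (1 : R) * AddMonoidAlgebra.single (m + 1) v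
    rw [AddMonoidAlgebra.single_mul_single, one_mul, show (-1 : ℤ) + (m + 1) = m by ring]
  · obtain ⟨c, hc, hwsum⟩ := st2_mem_sum hw
    have hcF : ∀ j : Fin r, c j ∈ 𝓕.F m := fun j => st2_term_le_F 𝓕 a n ha j m (hc j)
    have hsum2 : (⟨AddMonoidAlgebra.single m w, 𝓕.single_mem hgwF⟩ : 𝓕.extendedReesAlgebra)
        = ∑ j ∈ Finset.univ.filter (fun j : Fin r => (j : ℕ) < i),
            (⟨AddMonoidAlgebra.single m (c j), 𝓕.single_mem (hcF j)⟩ : 𝓕.extendedReesAlgebra) := by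
      apply Subtype.ext
      rw [AddSubmonoidClass.coe_finset_sum]
      show (AddMonoidAlgebra.single m w : LaurentPolynomial R)
          = ∑ j ∈ Finset.univ.filter (fun j : Fin r => (j : ℕ) < i),
              (AddMonoidAlgebra.single m (c j) : LaurentPolynomial R)
      rw [hwsum]
      exact map_sum (AddMonoidAlgebra.singleAddHom m) _ _
    rw [hsum2]
    refine Submodule.sum_mem _ fun j hj => ?_
    obtain ⟨z, hz, hcz⟩ := Ideal.mem_span_singleton_mul.mp (hc j)
    apply Ideal.mem_sup_right
    have hjlt := (Finset.mem_filter.mp hj).2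
    have hxmem : st2x 𝓕 a n ha j ∈ Ideal.ofList ((List.ofFn (st2x 𝓕 a n ha)).take i) :=
      Ideal.subset_span ((st2_mem_take_ofFn _ i _).2 ⟨j, hjlt, rfl⟩)
    have heq : (⟨AddMonoidAlgebra.single m (c j), 𝓕.single_mem (hcF j)⟩ : 𝓕.extendedReesAlgebra)
        = st2x 𝓕 a n ha j * ⟨AddMonoidAlgebra.single (m - n j) z, 𝓕.single_mem hz⟩ := by
      apply Subtype.ext
      simp only [MulMemClass.coe_mul]
      show (AddMonoidAlgebra.single m (c j) : LaurentPolynomial R)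
          = AddMonoidAlgebra.single (n j) (a j) * AddMonoidAlgebra.single (m - n j) z
      rw [AddMonoidAlgebra.single_mul_single, show n j + (m - n j) = m by ring, hcz]
    rw [heq]
    exact Ideal.mul_mem_right _ _ hxmem

lemma st2K_eq (hn : ∀ j, 0 ≤ n j) (ha : ∀ j, a j ∈ 𝓕.F (n j)) (i : ℕ) :
    st2K 𝓕 a n ha i = 𝓕.coeffIdeal (st2D 𝓕 a n i) (st2D_stab 𝓕 a n ha i) := by
  refine le_antisymm (sup_le ?_ ?_) ?_
  · rw [Ideal.span_le, Set.singleton_subset_iff, SetLike.mem_coe,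
      IdealFiltration.mem_coeffIdeal]
    intro m
    show (AddMonoidAlgebra.single (-1 : ℤ) (1 : R) : LaurentPolynomial R).coeff m ∈ st2D 𝓕 a n i m
    rw [AddMonoidAlgebra.coeff_single, Finsupp.single_apply]
    split_ifs with hm
    · subst hm
      apply Ideal.mem_sup_left
      rw [show (-1 : ℤ) + 1 = 0 by ring, 𝓕.zero_eq]
      trivial
    · exact Submodule.zero_mem _
  · rw [Ideal.span_le]
    intro zz hzz
    obtain ⟨j, hj, rfl⟩ := (st2_mem_take_ofFn _ i zz).1 hzz
    rw [SetLike.mem_coe, IdealFiltration.mem_coeffIdeal]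
    intro m
    show (AddMonoidAlgebra.single (n j) (a j) : LaurentPolynomial R).coeff m ∈ st2D 𝓕 a n i m
    rw [AddMonoidAlgebra.coeff_single, Finsupp.single_apply]
    split_ifs with hm
    · subst hm
      apply Ideal.mem_sup_right
      have h1 : a j ∈ Ideal.span {a j} * 𝓕.F (n j - n j) := by
        rw [sub_self, 𝓕.zero_eq, Ideal.mul_top]
        exact Ideal.mem_span_singleton_self _
      have h2 : Ideal.span {a j} * 𝓕.F (n j - n j) ≤ st2SS 𝓕 a n i (n j) := by
        rw [st2SS_def]
        exact st2_le_sum (p := fun k : Fin r => Ideal.span {a k} * 𝓕.F (n j - n k))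
          (Finset.mem_filter.2 ⟨Finset.mem_univ j, hj⟩)
      exact h2 h1
    · exact Submodule.zero_mem _
  · intro f hf
    rw [IdealFiltration.mem_coeffIdeal] at hf
    classical
    have hfF : ∀ k : ℤ, (f : LaurentPolynomial R).coeff k ∈ 𝓕.F k := f.2
    have hfs : f = ∑ m ∈ (f : LaurentPolynomial R).coeff.support,
        (⟨AddMonoidAlgebra.single m ((f : LaurentPolynomial R).coeff m),
          𝓕.single_mem (hfF m)⟩ : 𝓕.extendedReesAlgebra) := by
      apply Subtype.ext
      rw [AddSubmonoidClass.coe_finset_sum]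
      exact (AddMonoidAlgebra.sum_coeff_single (f : LaurentPolynomial R)).symm
    rw [hfs]
    exact Submodule.sum_mem _ fun m _ =>
      st2_single_mem_K 𝓕 a n ha _ m _ rfl (hf m)

lemma st2_Kstar [IsLocalRing R] [IsNoetherianRing R]
    (hn : ∀ j, 0 ≤ n j) (ha : ∀ j, a j ∈ 𝓕.F (n j))
    (hreg : RingTheory.Sequence.IsRegular R (List.ofFn a))
    (hint : ∀ m : ℤ, Ideal.span (Set.range a) ⊓ 𝓕.F m =
      ∑ j : Fin r, Ideal.span {a j} * 𝓕.F (m - n j))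
    (i : Fin r) (f : 𝓕.extendedReesAlgebra)
    (hf : st2x 𝓕 a n ha i * f ∈ st2K 𝓕 a n ha (i : ℕ)) :
    f ∈ st2K 𝓕 a n ha (i : ℕ) := by
  rw [st2K_eq 𝓕 a n hn ha, IdealFiltration.mem_coeffIdeal] at hf ⊢
  intro m
  have hco : ((st2x 𝓕 a n ha i * f : 𝓕.extendedReesAlgebra) :
      LaurentPolynomial R).coeff (m + n i) = a i * (f : LaurentPolynomial R).coeff m := by
    have hco2 : ((st2x 𝓕 a n ha i * f : 𝓕.extendedReesAlgebra) : LaurentPolynomial R)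
        = (AddMonoidAlgebra.single (n i) (a i) : LaurentPolynomial R)
          * (f : LaurentPolynomial R) := by
      simp only [MulMemClass.coe_mul]
      rfl
    rw [hco2, AddMonoidAlgebra.coeff_single_mul_apply, show -(n i) + (m + n i) = m by ring]
  have h1 := hf (m + n i)
  rw [hco] at h1
  have hfF : (f : LaurentPolynomial R).coeff m ∈ 𝓕.F m := f.2 m
  exact st2_star 𝓕 a n hn ha hreg hint i m _ hfF h1

lemma st2_mem_smul_top_iff (I : Ideal 𝓕.extendedReesAlgebra)
    (f : 𝓕.extendedReesAlgebra) :
    𝓕.toGradedRing f ∈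
        (I • (⊤ : Submodule 𝓕.extendedReesAlgebra 𝓕.gradedRing)) ↔
      f ∈ Ideal.span {𝓕.tinv} ⊔ I := by
  have hsurj : Function.Surjective 𝓕.toGradedRing := Ideal.Quotient.mk_surjective
  have hsmul : ∀ (z : 𝓕.extendedReesAlgebra) (g : 𝓕.gradedRing),
      z • g = 𝓕.toGradedRing z * g := fun z g => by
    rw [Algebra.smul_def]; rfl
  have hsub : ∀ f' h : 𝓕.extendedReesAlgebra,
      𝓕.toGradedRing f' = 𝓕.toGradedRing h ↔ f' - h ∈ Ideal.span {𝓕.tinv} :=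
    fun f' h => Ideal.Quotient.mk_eq_mk_iff_sub_mem f' h
  constructor
  · intro hf
    have key : ∀ g : 𝓕.gradedRing,
        g ∈ I • (⊤ : Submodule 𝓕.extendedReesAlgebra 𝓕.gradedRing) →
        ∀ f' : 𝓕.extendedReesAlgebra, 𝓕.toGradedRing f' = g →
          f' ∈ Ideal.span {𝓕.tinv} ⊔ I := by
      intro g hg
      refine Submodule.smul_induction_on hg ?_ ?_
      · intro z hz y _ f' hf'
        obtain ⟨h, rfl⟩ := hsurj y
        rw [hsmul, ← map_mul] at hf'
        have hmem : f' - z * h ∈ Ideal.span {𝓕.tinv} := (hsub _ _).1 hf'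
        have hfe : f' = (f' - z * h) + z * h := by ring
        rw [hfe]
        exact Submodule.add_mem _ (Ideal.mem_sup_left hmem)
          (Ideal.mem_sup_right (Ideal.mul_mem_right _ _ hz))
      · intro g1 g2 h1 h2 f' hf'
        obtain ⟨f1, hf1⟩ := hsurj g1
        obtain ⟨f2, hf2⟩ := hsurj g2
        have h12 : f' - (f1 + f2) ∈ Ideal.span {𝓕.tinv} := by
          apply (hsub _ _).1
          rw [map_add, hf1, hf2, hf']
        have hfe : f' = (f' - (f1 + f2)) + f1 + f2 := by ring
        rw [hfe]
        exact Submodule.add_mem _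
          (Submodule.add_mem _ (Ideal.mem_sup_left h12) (h1 f1 hf1)) (h2 f2 hf2)
    exact key _ hf f rfl
  · intro hf
    obtain ⟨u, hu, v, hv, hvu⟩ := Submodule.mem_sup.mp hf
    have hmk : 𝓕.toGradedRing f = v • (1 : 𝓕.gradedRing) := by
      rw [hsmul, mul_one]
      apply (hsub _ _).2
      have hfv : f - v = u := by rw [← hvu]; ring
      rw [hfv]; exact hu
    rw [hmk]
    exact Submodule.smul_mem_smul hv Submodule.mem_top

lemma st2_smulreg (I : Ideal 𝓕.extendedReesAlgebra) (z : 𝓕.extendedReesAlgebra)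
    (h : ∀ f : 𝓕.extendedReesAlgebra,
      z * f ∈ Ideal.span {𝓕.tinv} ⊔ I → f ∈ Ideal.span {𝓕.tinv} ⊔ I) :
    IsSMulRegular (𝓕.gradedRing ⧸
      (I • (⊤ : Submodule 𝓕.extendedReesAlgebra 𝓕.gradedRing))) z := by
  have hsurj : Function.Surjective 𝓕.toGradedRing := Ideal.Quotient.mk_surjective
  have hsmul : ∀ (zz : 𝓕.extendedReesAlgebra) (g : 𝓕.gradedRing),
      zz • g = 𝓕.toGradedRing zz * g := fun zz g => by
    rw [Algebra.smul_def]; rfl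
  set N := I • (⊤ : Submodule 𝓕.extendedReesAlgebra 𝓕.gradedRing) with hN
  intro u v huv
  obtain ⟨u', rfl⟩ := Submodule.Quotient.mk_surjective N u
  obtain ⟨v', rfl⟩ := Submodule.Quotient.mk_surjective N v
  have huv' : (Submodule.Quotient.mk (z • u' - z • v') : 𝓕.gradedRing ⧸ N) = 0 := by
    rw [Submodule.Quotient.mk_sub, sub_eq_zero]
    exact huv
  have hmem : z • u' - z • v' ∈ N := (Submodule.Quotient.mk_eq_zero N).1 huv'
  have hmem2 : z • (u' - v') ∈ N := by rwa [smul_sub]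
  obtain ⟨f, hfeq⟩ := hsurj (u' - v')
  have hmem3 : 𝓕.toGradedRing (z * f) ∈ N := by
    rw [map_mul, ← hsmul, hfeq]
    exact hmem2
  have hzf : z * f ∈ Ideal.span {𝓕.tinv} ⊔ I :=
    (st2_mem_smul_top_iff 𝓕 I (z * f)).1 hmem3
  have hfmem : 𝓕.toGradedRing f ∈ N := (st2_mem_smul_top_iff 𝓕 I f).2 (h f hzf)
  rw [hfeq] at hfmem
  have : (Submodule.Quotient.mk (u' - v') : 𝓕.gradedRing ⧸ N) = 0 :=
    (Submodule.Quotient.mk_eq_zero N).2 hfmem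
  rw [Submodule.Quotient.mk_sub, sub_eq_zero] at this
  exact this

end St2Rees

end St2Aux


/-- Proposition 2.2, (2) ⇒ (1). If `a₁, …, a_r` is a regular sequence on `R`
and `(a₁, …, a_r) ∩ F_m = Σ_j a_j F_{m - n_j}` for all `m ∈ ℤ`, then
`a₁t^{n₁}, …, a_rt^{n_r}` is a regular sequence on `G(F)`. -/
theorem statement_2 {R : Type u} [CommRing R] [IsLocalRing R] [IsNoetherianRing R]
    (𝓕 : IdealFiltration R) (h𝓕 : 𝓕.IsHilbertFiltration)
    (r : ℕ) (hr : 0 < r) (a : Fin r → R) (n : Fin r → ℤ) (hn : ∀ i, 0 ≤ n i)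
    (ha : ∀ i, a i ∈ 𝓕.F (n i))
    (hreg : RingTheory.Sequence.IsRegular R (List.ofFn a))
    (hint : ∀ m : ℤ, Ideal.span (Set.range a) ⊓ 𝓕.F m =
      ∑ j : Fin r, Ideal.span {a j} * 𝓕.F (m - n j)) :
    RingTheory.Sequence.IsRegular 𝓕.gradedRing
      (List.ofFn fun i => (⟨AddMonoidAlgebra.single (n i) (a i), 𝓕.single_mem (ha i)⟩ :
        𝓕.extendedReesAlgebra)) := by
  classical
  obtain ⟨hNoeth, hrad, hstab⟩ := h𝓕
  show RingTheory.Sequence.IsRegular 𝓕.gradedRing (List.ofFn (st2x 𝓕 a n ha))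
  rw [RingTheory.Sequence.isRegular_iff]
  refine ⟨⟨fun i hi => ?_⟩, ?_⟩
  · rw [List.length_ofFn] at hi
    have hget : (List.ofFn (st2x 𝓕 a n ha))[i]'(by simpa using hi)
        = st2x 𝓕 a n ha ⟨i, hi⟩ := by
      rw [List.getElem_ofFn]
    rw [hget]
    exact st2_smulreg 𝓕 _ _
      (fun f hf => st2_Kstar 𝓕 a n hn ha hreg hint ⟨i, hi⟩ f hf)
  · intro htop
    have h1 : (1 : 𝓕.gradedRing) ∈ Ideal.ofList (List.ofFn (st2x 𝓕 a n ha)) •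
        (⊤ : Submodule 𝓕.extendedReesAlgebra 𝓕.gradedRing) := by
      rw [← htop]; trivial
    have h2 : (1 : 𝓕.extendedReesAlgebra) ∈
        Ideal.span {𝓕.tinv} ⊔ Ideal.ofList (List.ofFn (st2x 𝓕 a n ha)) :=
      (st2_mem_smul_top_iff 𝓕 _ 1).1 (by rwa [map_one])
    have htake : (List.ofFn (st2x 𝓕 a n ha)).take r = List.ofFn (st2x 𝓕 a n ha) := by
      apply List.take_of_length_le
      simp
    have h3 : (1 : 𝓕.extendedReesAlgebra) ∈ st2K 𝓕 a n ha r := by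
      unfold st2K
      rw [htake]
      exact h2
    rw [st2K_eq 𝓕 a n hn ha, IdealFiltration.mem_coeffIdeal] at h3
    have h4 := h3 0
    have h5 : ((1 : 𝓕.extendedReesAlgebra) : LaurentPolynomial R).coeff 0 = 1 := by
      show (1 : LaurentPolynomial R).coeff 0 = 1
      rw [AddMonoidAlgebra.one_def, AddMonoidAlgebra.coeff_single]
      exact Finsupp.single_eq_same
    rw [h5] at h4
    have hle : st2D 𝓕 a n r 0 ≤ maximalIdeal R := by
      refine sup_le ?_ ?_
      · have hF1 : 𝓕.F (0 + 1) = 𝓕.F 1 := by norm_num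
        rw [hF1, ← hrad]
        exact Ideal.le_radical
      · refine le_trans (st2SS_le_AI 𝓕 a n r 0) (le_trans (st2AI_le_span_range a) ?_)
        rw [Ideal.span_le]
        rintro z ⟨j, rfl⟩
        exact st2_amem a hreg j
    exact (IsLocalRing.maximalIdeal.isMaximal R).ne_top
      ((Ideal.eq_top_iff_one _).2 (hle h4))

end
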